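/- arXiv:2211.03901 — 3 statements merged into one kernel-verified Lean document; each statement's English description precedes it below -/
import Mathlib

section
/- Let n ≥ 1 and let λ ≠ 0 be a partition with at most 2n rows such that for every j, the number of boxes in the j-th column of λ is either < j or ≥ n + j. Let i be the largest j such that the j-th column of λ has ≥ n + j boxes (the n-index of λ). Then λ_{i+1} = λ_{i+2} = ⋯ = λ_{i+n} = i. -/
/-- A partition `λ`: `part i` is the `i`-th part `λ_i` (indexed from `1`; `part 0 = 0`),
the parts are weakly decreasing and eventually zero. -/
structure Partn where
  part : ℕ → ℕ
  part_zero : part 0 = 0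
  part_antitone : ∀ ⦃i j : ℕ⦄, 1 ≤ i → i ≤ j → part j ≤ part i
  support_finite : (Function.support part).Finite

namespace Partn

/-- The size `|λ|` of a partition: the sum of its parts. -/
noncomputable def size (l : Partn) : ℕ := ∑ᶠ i, l.part i

/-- The number of boxes in the `j`-th column of the Young diagram of `l`
(for `j ≥ 1`); equivalently the `j`-th part `λ†_j` of the transpose partition. -/
noncomputable def colLen (l : Partn) (j : ℕ) : ℕ :=
  Set.ncard {i : ℕ | 1 ≤ i ∧ j ≤ l.part i}

/-- The cell in row `p.1`, column `p.2` (both indexed from 1) belongs to the skew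
Young diagram `γ/α`. -/
def InSkew (γ α : Partn) (p : ℕ × ℕ) : Prop :=
  1 ≤ p.1 ∧ α.part p.1 < p.2 ∧ p.2 ≤ γ.part p.1

end Partn

/-- A Littlewood–Richardson tableau of shape `γ/α` and content `β`: a semistandard
filling of the skew diagram `γ/α` in which the label `i` occurs `β_i` times, and whose
reverse reading word (rows read right-to-left, top row first) is a lattice word:
every prefix contains at least as many `i`'s as `(i+1)`'s.  A prefix of the reading
word consists of the cells `(r', c')` with `r' < r`, together with those with
`r' = r` and `c' ≥ c`, for some position `(r, c)`. -/
structure LRTableau (α β γ : Partn) where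
  entry : ℕ → ℕ → ℕ
  subset : ∀ i, α.part i ≤ γ.part i
  entry_pos : ∀ r c, Partn.InSkew γ α (r, c) → 1 ≤ entry r c
  row_weak : ∀ r c c', Partn.InSkew γ α (r, c) → Partn.InSkew γ α (r, c') → c ≤ c' →
    entry r c ≤ entry r c'
  col_strict : ∀ r c, Partn.InSkew γ α (r, c) → Partn.InSkew γ α (r + 1, c) →
    entry r c < entry (r + 1) c
  content : ∀ i, 1 ≤ i →
    Set.ncard {p : ℕ × ℕ | Partn.InSkew γ α p ∧ entry p.1 p.2 = i} = β.part i
  lattice : ∀ r c i, 1 ≤ i →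
    Set.ncard {p : ℕ × ℕ | Partn.InSkew γ α p ∧
        (p.1 < r ∨ (p.1 = r ∧ c ≤ p.2)) ∧ entry p.1 p.2 = i + 1} ≤
    Set.ncard {p : ℕ × ℕ | Partn.InSkew γ α p ∧
        (p.1 < r ∨ (p.1 = r ∧ c ≤ p.2)) ∧ entry p.1 p.2 = i}

/-- The Littlewood–Richardson coefficient `c^γ_{α,β}`: the number of
Littlewood–Richardson tableaux of shape `γ/α` and content `β`; equivalently, the
multiplicity of the Schur function `s_γ` in the product `s_α · s_β`. -/
noncomputable def lrCoeff (α β γ : Partn) : ℕ := Nat.card (LRTableau α β γ)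

/-!
Column lengths and parts determine each other through the transpose duality
`k ≤ λ†_j ↔ j ≤ λ_k` (for `j, k ≥ 1`). Since `λ†_i ≥ n + i`, every row up to `i + n` reaches
column `i`. By maximality of `i` the column `i + 1` has fewer than `n + i + 1` boxes, so the
dichotomy forces `λ†_{i+1} ≤ i`, i.e. row `i + 1` stops at column `i`.
-/

namespace Partn

variable (l : Partn) {j k : ℕ}

theorem le_colLen_of_le_part (hj : 1 ≤ j) (h : j ≤ l.part k) : k ≤ l.colLen j := by
  have hsub : Set.Icc 1 k ⊆ {m : ℕ | 1 ≤ m ∧ j ≤ l.part m} := fun m ⟨hm1, hmk⟩ =>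
    ⟨hm1, h.trans (l.part_antitone hm1 hmk)⟩
  have hfin : {m : ℕ | 1 ≤ m ∧ j ≤ l.part m}.Finite :=
    l.support_finite.subset fun m ⟨_, hm⟩ h0 => by omega
  calc k = (Set.Icc 1 k).ncard := by simp
    _ ≤ l.colLen j := Set.ncard_le_ncard hsub hfin

theorem le_part_of_le_colLen (hk : 1 ≤ k) (h : k ≤ l.colLen j) : j ≤ l.part k := by
  by_contra! hlt
  have hsub : {m : ℕ | 1 ≤ m ∧ j ≤ l.part m} ⊆ Set.Ico 1 k := fun m ⟨hm1, hm⟩ =>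
    ⟨hm1, by_contra fun hkm => by have := l.part_antitone hk (not_lt.1 hkm); omega⟩
  have : l.colLen j ≤ k - 1 := by
    simpa [colLen] using Set.ncard_le_ncard hsub (Set.finite_Ico 1 k)
  omega

end Partn

theorem nIndex_middle_parts_general (n i : ℕ) (l : Partn)
    (hstar : ∀ j : ℕ, 1 ≤ j → l.colLen j < j ∨ n + j ≤ l.colLen j)
    (hi2 : n + i ≤ l.colLen i)
    (hi3 : ∀ j : ℕ, i < j → l.colLen j < n + j) :
    ∀ j : ℕ, i + 1 ≤ j → j ≤ i + n → l.part j = i := by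
  intro j hj1 hj2
  have hrow_reaches : i ≤ l.part j := l.le_part_of_le_colLen (by omega) (by omega)
  have hrow_stops : l.part (i + 1) ≤ i := by
    by_contra! hlong
    have hcol : i + 1 ≤ l.colLen (i + 1) := l.le_colLen_of_le_part (by omega) hlong
    rcases hstar (i + 1) (by omega) with hshort | htall
    · omega
    · have := hi3 (i + 1) (by omega)
      omega
  have := l.part_antitone (by omega : 1 ≤ i + 1) hj1
  omega

/-- Let `n ≥ 1` and let `λ ≠ 0` be a partition with at most `2n` rows such that for
every `j ≥ 1`, the `j`-th column of `λ` has either `< j` or `≥ n + j` boxes.  If `i`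
is the largest `j` such that the `j`-th column has `≥ n + j` boxes (the `n`-index of
`λ`), then `λ_{i+1} = λ_{i+2} = ⋯ = λ_{i+n} = i`. -/
theorem nIndex_middle_parts (n i : ℕ) (l : Partn)
    (hn : 1 ≤ n)
    (hne : l.part 1 ≠ 0)
    (hrows : ∀ j : ℕ, 2 * n < j → l.part j = 0)
    (hstar : ∀ j : ℕ, 1 ≤ j → l.colLen j < j ∨ n + j ≤ l.colLen j)
    (hi1 : 1 ≤ i) (hi2 : n + i ≤ l.colLen i)
    (hi3 : ∀ j : ℕ, i < j → l.colLen j < n + j) :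
    ∀ j : ℕ, i + 1 ≤ j → j ≤ i + n → l.part j = i :=
  nIndex_middle_parts_general n i l hstar hi2 hi3
end

section
/- Let λ be a nonzero partition contained in the (2n) × (d−n−1) rectangle with n-index i < n, and let α, β, γ be partitions with at most n rows such that c^λ_{α,β} ≠ 0 and c^γ_{α,β} ≠ 0. Then γ_{i+1} ≥ i. -/
namespace Partn

lemma finite_setOf_inSkew (γ α : Partn) : {p : ℕ × ℕ | InSkew γ α p}.Finite := by
  refine (γ.support_finite.prod (Set.finite_Icc 1 (γ.part 1))).subset ?_
  rintro ⟨r, c⟩ ⟨hr, hαc, hcγ⟩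
  dsimp only at hαc hcγ
  have hγ1 : γ.part r ≤ γ.part 1 := γ.part_antitone le_rfl hr
  exact ⟨by simp only [Function.mem_support]; omega, by omega, by omega⟩

lemma colLen_antitone (l : Partn) {j k : ℕ} (hj : 1 ≤ j) (hjk : j ≤ k) :
    l.colLen k ≤ l.colLen j := by
  refine Set.ncard_le_ncard (fun r ⟨hr, hkr⟩ => ⟨hr, hjk.trans hkr⟩) ?_
  refine l.support_finite.subset fun r ⟨_, hjr⟩ => ?_
  simp only [Function.mem_support]
  omega

lemma le_part_of_le_colLen_s10 (l : Partn) {j r : ℕ} (hr : 1 ≤ r) (h : r ≤ l.colLen j) :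
    j ≤ l.part r := by
  by_contra! hlt
  have hsub : {s : ℕ | 1 ≤ s ∧ j ≤ l.part s} ⊆ Set.Ico 1 r := fun s ⟨hs, hjs⟩ =>
    ⟨hs, lt_of_not_ge fun hrs => (l.part_antitone hr hrs).not_gt (hlt.trans_le hjs)⟩
  have hcard : l.colLen j ≤ r - 1 :=
    (Set.ncard_le_ncard hsub (Set.finite_Ico 1 r)).trans_eq (Set.ncard_Ico_nat 1 r)
  omega

lemma inSkew_of_le_colLen {l α : Partn} {r c : ℕ} (hr : 1 ≤ r) (hrc : r ≤ l.colLen c)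
    (hαc : α.part r < c) : InSkew l α (r, c) :=
  ⟨hr, hαc, l.le_part_of_le_colLen_s10 hr hrc⟩

lemma InSkew.fst_le {γ α : Partn} {n : ℕ} (hγ : ∀ j, n < j → γ.part j = 0) {p : ℕ × ℕ}
    (hp : InSkew γ α p) : p.1 ≤ n := by
  by_contra! hn
  have := hγ p.1 hn
  have := hp.2
  omega

lemma ncard_le_ncard_of_subset_inSkew {γ α : Partn} {s t : Set (ℕ × ℕ)} (hst : s ⊆ t)
    (ht : ∀ p ∈ t, InSkew γ α p) : s.ncard ≤ t.ncard :=
  Set.ncard_le_ncard hst ((finite_setOf_inSkew γ α).subset ht)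

end Partn

namespace LRTableau

open Partn

variable {α β γ : Partn}

lemma entry_le_of_part_eq_zero (T : LRTableau α β γ) {n : ℕ}
    (hβ : ∀ j, n < j → β.part j = 0) {r c : ℕ} (hp : InSkew γ α (r, c)) : T.entry r c ≤ n := by
  by_contra! hn
  have hpos : 0 < {p : ℕ × ℕ | InSkew γ α p ∧ T.entry p.1 p.2 = T.entry r c}.ncard :=
    (Set.ncard_pos ((finite_setOf_inSkew γ α).subset fun p hp => hp.1)).mpr ⟨(r, c), hp, rfl⟩
  rw [T.content _ (T.entry_pos r c hp), hβ _ hn] at hpos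
  exact hpos.false

lemma le_entry_of_column (T : LRTableau α β γ) {r c : ℕ} :
    ∀ k, (∀ m, 1 ≤ m → m ≤ k → InSkew γ α (r + m, c)) → k ≤ T.entry (r + k) c
  | 0, _ => Nat.zero_le _
  | k + 1, hcol => by
    rcases Nat.eq_zero_or_pos k with rfl | hk
    · exact T.entry_pos _ _ (hcol 1 le_rfl le_rfl)
    · have ih := le_entry_of_column T k fun m hm hmk => hcol m hm (by omega)
      have := T.col_strict (r + k) c (hcol k hk (by omega)) (hcol (k + 1) (by omega) le_rfl)
      rw [← add_assoc]
      omega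

lemma sub_le_part_of_rectangle (T : LRTableau α β γ) {n a b r : ℕ} (hn : 1 ≤ n)
    (hβ : ∀ j, n < j → β.part j = 0)
    (hrect : ∀ c, a < c → c ≤ b → ∀ m, 1 ≤ m → m ≤ n → InSkew γ α (r + m, c)) :
    b - a ≤ β.part n := by
  have hsub : (fun c => (r + n, c)) '' Set.Ioc a b ⊆
      {p : ℕ × ℕ | InSkew γ α p ∧ T.entry p.1 p.2 = n} := by
    rintro _ ⟨c, ⟨hac, hcb⟩, rfl⟩
    have hcell := hrect c hac hcb n hn le_rfl
    exact ⟨hcell, le_antisymm (T.entry_le_of_part_eq_zero hβ hcell)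
      (T.le_entry_of_column n fun m hm hmn => hrect c hac hcb m hm hmn)⟩
  calc b - a = ((fun c => (r + n, c)) '' Set.Ioc a b).ncard := by
        rw [Set.ncard_image_of_injective _ (Prod.mk_right_injective _), Set.ncard_Ioc_nat]
    _ ≤ _ := ncard_le_ncard_of_subset_inSkew hsub fun p hp => hp.1
    _ = β.part n := T.content n hn

lemma entry_le_row (T : LRTableau α β γ) : ∀ r c, InSkew γ α (r, c) → T.entry r c ≤ r := by
  intro r
  induction r using Nat.strong_induction_on with
  | _ r ih =>
    intro c hp
    by_contra! hlt
    obtain ⟨k, hentry⟩ : ∃ k, T.entry r c = k + 1 :=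
      Nat.exists_eq_add_one.mpr (T.entry_pos r c hp)
    have hprefix := T.lattice r c k (by have := hp.1; omega)
    have hnone : {p : ℕ × ℕ | InSkew γ α p ∧ (p.1 < r ∨ (p.1 = r ∧ c ≤ p.2)) ∧
        T.entry p.1 p.2 = k} = ∅ := by
      refine Set.eq_empty_of_forall_notMem ?_
      rintro ⟨r', c'⟩ ⟨hp', hr' | ⟨hr', hcc'⟩, hk'⟩ <;> dsimp only at hr' hk'
      · have := ih r' hr' c' hp'
        omega
      · subst hr'
        have := T.row_weak r' c c' hp hp' hcc'
        omega
    rw [hnone, Set.ncard_empty, Nat.le_zero, Set.ncard_eq_zero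
      ((finite_setOf_inSkew γ α).subset fun p hp => hp.1)] at hprefix
    exact hprefix.subset ⟨hp, Or.inr ⟨rfl, le_rfl⟩, hentry⟩

noncomputable def labelCount (T : LRTableau α β γ) (r k : ℕ) : ℕ :=
  {p : ℕ × ℕ | InSkew γ α p ∧ p.1 ≤ r ∧ T.entry p.1 p.2 = k}.ncard

lemma labelCount_succ_le (T : LRTableau α β γ) {k : ℕ} (hk : 1 ≤ k) (r : ℕ) :
    T.labelCount (r + 1) (k + 1) ≤ T.labelCount r k := by
  -- Apply the lattice condition to the prefix ending just before the first entry of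
  -- row `r + 1` exceeding `k`: it holds every `k + 1` of that row and no `k` of it.
  let cut := {c | (InSkew γ α (r + 1, c) ∧ k + 1 ≤ T.entry (r + 1) c) ∨ γ.part (r + 1) < c}
  have hc : sInf cut ∈ cut := Nat.sInf_mem ⟨γ.part (r + 1) + 1, Or.inr (Nat.lt_succ_self _)⟩
  set c := sInf cut
  refine (ncard_le_ncard_of_subset_inSkew ?_ fun p hp => hp.1).trans
    ((T.lattice (r + 1) c k hk).trans (ncard_le_ncard_of_subset_inSkew ?_ fun p hp => hp.1))
  · rintro ⟨r', c'⟩ ⟨hp, hr', hk'⟩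
    refine ⟨hp, ?_, hk'⟩
    dsimp only at hr' hk' ⊢
    rcases Nat.lt_or_ge r' (r + 1) with hlt | hge
    · exact Or.inl hlt
    · obtain rfl : r' = r + 1 := by omega
      exact Or.inr ⟨rfl, Nat.sInf_le (Or.inl ⟨hp, hk'.ge⟩)⟩
  · rintro ⟨r', c'⟩ ⟨hp, hr' | ⟨hr', hcc'⟩, hk'⟩ <;> dsimp only at hr' hk'
    · exact ⟨hp, by dsimp only; omega, hk'⟩
    · subst hr'
      rcases hc with ⟨hpc, hkc⟩ | hγc
      · have := T.row_weak _ c c' hpc hp hcc'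
        omega
      · have := hp.2.2
        dsimp only at this
        omega

lemma labelCount_le_labelCount (T : LRTableau α β γ) {a b : ℕ} (ha : 1 ≤ a) (hab : a ≤ b) :
    T.labelCount b b ≤ T.labelCount a a := by
  induction b, hab using Nat.le_induction with
  | base => exact le_rfl
  | succ b hab ih => exact (T.labelCount_succ_le (ha.trans hab) b).trans ih

lemma labelCount_self_le (T : LRTableau α β γ) (r : ℕ) :
    T.labelCount r r ≤ γ.part r - α.part r := by
  have hsub : {p : ℕ × ℕ | InSkew γ α p ∧ p.1 ≤ r ∧ T.entry p.1 p.2 = r} ⊆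
      (fun c => (r, c)) '' Set.Ioc (α.part r) (γ.part r) := by
    rintro ⟨r', c⟩ ⟨hp, hr', hk⟩
    have := T.entry_le_row r' c hp
    dsimp only at hr' hk
    obtain rfl : r' = r := by omega
    exact ⟨c, ⟨hp.2.1, hp.2.2⟩, rfl⟩
  calc T.labelCount r r ≤ ((fun c => (r, c)) '' Set.Ioc (α.part r) (γ.part r)).ncard :=
        Set.ncard_le_ncard hsub ((Set.finite_Ioc _ _).image _)
    _ = γ.part r - α.part r := by
        rw [Set.ncard_image_of_injective _ (Prod.mk_right_injective _), Set.ncard_Ioc_nat]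

lemma part_eq_labelCount (T : LRTableau α β γ) {n k : ℕ} (hγ : ∀ j, n < j → γ.part j = 0)
    (hk : 1 ≤ k) : β.part k = T.labelCount n k := by
  rw [← T.content k hk, labelCount]
  congr 1
  ext p
  exact ⟨fun ⟨hp, hpk⟩ => ⟨hp, hp.fst_le hγ, hpk⟩, fun ⟨hp, _, hpk⟩ => ⟨hp, hpk⟩⟩

lemma part_le_sub (T : LRTableau α β γ) {n k : ℕ} (hγ : ∀ j, n < j → γ.part j = 0)
    (hk : 1 ≤ k) (hkn : k ≤ n) : β.part n ≤ γ.part k - α.part k :=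
  calc β.part n = T.labelCount n n := T.part_eq_labelCount hγ (hk.trans hkn)
    _ ≤ T.labelCount k k := T.labelCount_le_labelCount hk hkn
    _ ≤ γ.part k - α.part k := T.labelCount_self_le k

end LRTableau

theorem gamma_succ_ge_general (n i : ℕ) (l α β γ : Partn)
    (hin : i < n)
    (hi2 : n + i ≤ l.colLen i)
    (hβ : ∀ j : ℕ, n < j → β.part j = 0)
    (hγ : ∀ j : ℕ, n < j → γ.part j = 0)
    (hlr : lrCoeff α β l ≠ 0) (hγc : lrCoeff α β γ ≠ 0) :
    i ≤ γ.part (i + 1) := by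
  obtain ⟨T⟩ : Nonempty (LRTableau α β l) := (Nat.card_ne_zero.mp hlr).1
  obtain ⟨S⟩ : Nonempty (LRTableau α β γ) := (Nat.card_ne_zero.mp hγc).1
  have hrect : ∀ c, α.part (i + 1) < c → c ≤ i → ∀ m, 1 ≤ m → m ≤ n →
      Partn.InSkew l α (i + m, c) := by
    intro c hαc hci m hm hmn
    refine Partn.inSkew_of_le_colLen (by omega) ?_ ?_
    · calc i + m ≤ n + i := by omega
        _ ≤ l.colLen i := hi2
        _ ≤ l.colLen c := l.colLen_antitone (by omega) hci
    · exact (α.part_antitone (by omega) (by omega)).trans_lt hαc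
  have hlower : i - α.part (i + 1) ≤ β.part n :=
    T.sub_le_part_of_rectangle (by omega) hβ hrect
  have hupper : β.part n ≤ γ.part (i + 1) - α.part (i + 1) :=
    S.part_le_sub hγ (by omega) hin
  have := S.subset (i + 1)
  omega

/-- Let `λ` be a nonzero partition contained in the `(2n) × (d−n−1)` rectangle with
`n`-index `i < n`, and let `α`, `β`, `γ` be partitions with at most `n` rows such
that `c^λ_{α,β} ≠ 0` and `c^γ_{α,β} ≠ 0`.  Then `γ_{i+1} ≥ i`. -/
theorem gamma_succ_ge (n d i : ℕ) (l α β γ : Partn)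
    (hnd : n < d)
    (hin : i < n)
    (hne : l.part 1 ≠ 0)
    (hrows : ∀ j : ℕ, 2 * n < j → l.part j = 0)
    (hcols : ∀ j : ℕ, 1 ≤ j → l.part j ≤ d - n - 1)
    (hstar : ∀ j : ℕ, 1 ≤ j → l.colLen j < j ∨ n + j ≤ l.colLen j)
    (hi1 : 1 ≤ i) (hi2 : n + i ≤ l.colLen i)
    (hi3 : ∀ j : ℕ, i < j → l.colLen j < n + j)
    (hα : ∀ j : ℕ, n < j → α.part j = 0)
    (hβ : ∀ j : ℕ, n < j → β.part j = 0)
    (hγ : ∀ j : ℕ, n < j → γ.part j = 0)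
    (hlr : lrCoeff α β l ≠ 0) (hγc : lrCoeff α β γ ≠ 0) :
    i ≤ γ.part (i + 1) :=
  gamma_succ_ge_general n i l α β γ hin hi2 hβ hγ hlr hγc
end

section
/- Let A = 1 + a_1 q + a_2 q^2 + ⋯ and B = 1 + b_1 q + b_2 q^2 + ⋯ be formal power series over a commutative Q-algebra. If for every n ≥ 1 the coefficients [q^n](A·B^{ℓ+1}) are known for all ℓ ≥ n, then A and B are uniquely determined; more precisely, if A·B^{ℓ+1} = A'·B'^{ℓ+1} modulo q^{n+1} for all ℓ ≥ n and all n, then A = A' and B = B'. -/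
/-!
Reduce modulo `q^{n+1}` and put `P = A·B^{n+1}`.  The hypotheses for `ℓ = n` and `ℓ = n + 1`
say `P ≡ P'` and `P·B ≡ P'·B'`; as `P` is a unit, `B ≡ B'`, and then cancelling the unit
`B^{n+1}` gives `A ≡ A'`, with no induction on `n`.
-/

open PowerSeries

theorem eq_and_eq_of_mul_pow_eq_of_mul_pow_succ_eq {M : Type*} [CommMonoid M] {a a' b b' : M}
    (ha : IsUnit a) (hb : IsUnit b) {k : ℕ} (hk : a * b ^ k = a' * b' ^ k)
    (hk_succ : a * b ^ (k + 1) = a' * b' ^ (k + 1)) : a = a' ∧ b = b' := by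
  have hb_eq : b = b' := by
    refine (ha.mul (hb.pow k)).mul_left_cancel ?_
    calc a * b ^ k * b = a' * b' ^ k * b' := by
          rw [mul_assoc, ← pow_succ, hk_succ, pow_succ, mul_assoc]
      _ = a * b ^ k * b' := by rw [hk]
  subst hb_eq
  exact ⟨(hb.pow k).mul_right_cancel hk, rfl⟩

namespace PowerSeries

variable {R : Type*} [CommRing R]

theorem mk_span_X_pow_eq_iff {n : ℕ} {F G : R⟦X⟧} :
    Ideal.Quotient.mk (Ideal.span {X ^ n}) F = Ideal.Quotient.mk _ G ↔
      ∀ m < n, coeff m F = coeff m G := by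
  simp only [Ideal.Quotient.eq, Ideal.mem_span_singleton, X_pow_dvd_iff, map_sub, sub_eq_zero]

end PowerSeries

theorem powerSeries_unique_of_coeffs_general (R : Type*) [CommRing R]
    (A A' B B' : R⟦X⟧)
    (hA : constantCoeff A = 1)
    (hB : constantCoeff B = 1)
    (h : ∀ n ℓ : ℕ, n ≤ ℓ → ∀ m : ℕ, m ≤ n →
      coeff m (A * B ^ (ℓ + 1)) = coeff m (A' * B' ^ (ℓ + 1))) :
    A = A' ∧ B = B' := by
  have hmod (n : ℕ) : Ideal.Quotient.mk (Ideal.span {X ^ (n + 1)}) A = Ideal.Quotient.mk _ A' ∧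
      Ideal.Quotient.mk (Ideal.span {X ^ (n + 1)}) B = Ideal.Quotient.mk _ B' := by
    have hunit {F : R⟦X⟧} (hF : constantCoeff F = 1) :
        IsUnit (Ideal.Quotient.mk (Ideal.span {X ^ (n + 1)}) F) :=
      (isUnit_iff_constantCoeff.mpr (hF ▸ isUnit_one)).map _
    have hcongr (ℓ : ℕ) (hℓ : n ≤ ℓ) := mk_span_X_pow_eq_iff.mpr fun m hm ↦
      h n ℓ hℓ m (Nat.lt_succ_iff.mp hm)
    simp only [map_mul, map_pow] at hcongr
    exact eq_and_eq_of_mul_pow_eq_of_mul_pow_succ_eq (hunit hA) (hunit hB)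
      (hcongr n le_rfl) (hcongr (n + 1) n.le_succ)
  refine ⟨ext fun n ↦ ?_, ext fun n ↦ ?_⟩
  · exact mk_span_X_pow_eq_iff.mp (hmod n).1 n n.lt_succ_self
  · exact mk_span_X_pow_eq_iff.mp (hmod n).2 n n.lt_succ_self

/-- **Uniqueness of the universal series.**
Let `A = 1 + a₁ q + a₂ q² + ⋯` and `B = 1 + b₁ q + b₂ q² + ⋯` be formal power series
over a commutative `ℚ`-algebra, and similarly `A'`, `B'`.  If for every `n` and
every `ℓ ≥ n` the products `A·B^{ℓ+1}` and `A'·B'^{ℓ+1}` agree modulo `q^{n+1}`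
(i.e. their coefficients agree in degrees `≤ n`), then `A = A'` and `B = B'`:
the coefficients `[qⁿ](A·B^{ℓ+1})` for `ℓ ≥ n` determine `A` and `B` uniquely. -/
theorem powerSeries_unique_of_coeffs (R : Type*) [CommRing R] [Algebra ℚ R]
    (A A' B B' : R⟦X⟧)
    (hA : constantCoeff A = 1) (hA' : constantCoeff A' = 1)
    (hB : constantCoeff B = 1) (hB' : constantCoeff B' = 1)
    (h : ∀ n ℓ : ℕ, n ≤ ℓ → ∀ m : ℕ, m ≤ n →
      coeff m (A * B ^ (ℓ + 1)) = coeff m (A' * B' ^ (ℓ + 1))) :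
    A = A' ∧ B = B' :=
  powerSeries_unique_of_coeffs_general R A A' B B' hA hB h
end
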